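/- The norm constraint is active at any minimizer: if the prototypes w_1, …, w_k form a simplex equiangular tight frame and h* ∈ E satisfies ‖h*‖ ≤ 1 and L_y(h*) ≤ L_y(h) for all h ∈ E with ‖h‖ ≤ 1, then ‖h*‖ = 1. -/
import Mathlib


open scoped RealInnerProductSpace

/-- The limiting per-sample loss
`L_y(h) = log( Σ_c exp⟪w_c, h⟫ ) − 2⟪w_y, h⟫`. -/
noncomputable def limitLoss {d k : ℕ} (w : Fin k → EuclideanSpace ℝ (Fin d)) (y : Fin k)
    (h : EuclideanSpace ℝ (Fin d)) : ℝ :=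
  Real.log (∑ c : Fin k, Real.exp ⟪w c, h⟫) - 2 * ⟪w y, h⟫

/-- **The norm constraint is active at any minimizer.** If the unit-norm prototypes form a
simplex ETF and `h*` minimizes `L_y` over the closed unit ball, then `‖h*‖ = 1`. -/
theorem etf_minimizer_unit_norm (d k : ℕ) (hd : 0 < d) (hk : 2 ≤ k)
    (w : Fin k → EuclideanSpace ℝ (Fin d)) (hw : ∀ c, ‖w c‖ = 1)
    (hetf : ∀ c c' : Fin k, c ≠ c' → ⟪w c, w c'⟫ = -1 / ((k : ℝ) - 1))
    (y : Fin k) (hstar : EuclideanSpace ℝ (Fin d)) (hnorm : ‖hstar‖ ≤ 1)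
    (hmin : ∀ h : EuclideanSpace ℝ (Fin d), ‖h‖ ≤ 1 → limitLoss w y hstar ≤ limitLoss w y h) :
    ‖hstar‖ = 1 := by
  by_contra hne
  have hlt : ‖hstar‖ < 1 := lt_of_le_of_ne hnorm hne
  set t : ℝ := 1 - ‖hstar‖ with ht_def
  have ht : 0 < t := by simp [ht_def]; linarith
  set h' : EuclideanSpace ℝ (Fin d) := hstar + t • w y with hh'
  have hk1 : (1 : ℝ) ≤ (k : ℝ) - 1 := by
    have : (2 : ℝ) ≤ (k : ℝ) := by exact_mod_cast hk
    linarith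
  have hnorm' : ‖h'‖ ≤ 1 := by
    calc ‖h'‖ ≤ ‖hstar‖ + ‖t • w y‖ := norm_add_le _ _
    _ = ‖hstar‖ + t := by rw [norm_smul, hw y]; simp [abs_of_pos ht]
    _ = 1 := by rw [ht_def]; ring
  have hyy : ⟪w y, w y⟫ = (1 : ℝ) := by
    rw [real_inner_self_eq_norm_sq, hw y]; norm_num
  have hinner : ∀ c, ⟪w c, h'⟫ = ⟪w c, hstar⟫ + t * ⟪w c, w y⟫ := by
    intro c
    rw [hh', inner_add_right, real_inner_smul_right]
  have hle1 : ∀ c, ⟪w c, w y⟫ ≤ (1 : ℝ) := by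
    intro c
    by_cases hc : c = y
    · rw [hc, hyy]
    · rw [hetf c y hc]
      have : (0:ℝ) < (k : ℝ) - 1 := by linarith
      have : -1 / ((k : ℝ) - 1) ≤ 0 := div_nonpos_of_nonpos_of_nonneg (by norm_num) (by linarith)
      linarith
  have hpos : 0 < ∑ c : Fin k, Real.exp ⟪w c, hstar⟫ := by
    apply Finset.sum_pos (fun c _ => Real.exp_pos _)
    exact Finset.univ_nonempty_iff.mpr ⟨⟨0, by omega⟩⟩
  have hsumle : ∑ c : Fin k, Real.exp ⟪w c, h'⟫ ≤
      Real.exp t * ∑ c : Fin k, Real.exp ⟪w c, hstar⟫ := by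
    rw [Finset.mul_sum]
    apply Finset.sum_le_sum
    intro c _
    rw [hinner c, ← Real.exp_add]
    apply Real.exp_le_exp.mpr
    have := hle1 c
    nlinarith [ht.le]
  have hlogle : Real.log (∑ c : Fin k, Real.exp ⟪w c, h'⟫) ≤
      t + Real.log (∑ c : Fin k, Real.exp ⟪w c, hstar⟫) := by
    calc Real.log (∑ c : Fin k, Real.exp ⟪w c, h'⟫)
        ≤ Real.log (Real.exp t * ∑ c : Fin k, Real.exp ⟪w c, hstar⟫) := by
          apply Real.log_le_log _ hsumle
          exact Finset.sum_pos (fun c _ => Real.exp_pos _)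
            (Finset.univ_nonempty_iff.mpr ⟨⟨0, by omega⟩⟩)
    _ = t + Real.log (∑ c : Fin k, Real.exp ⟪w c, hstar⟫) := by
          rw [Real.log_mul (Real.exp_ne_zero t) (ne_of_gt hpos), Real.log_exp]
  have hLle : limitLoss w y h' ≤ limitLoss w y hstar - t := by
    unfold limitLoss
    have hy' : ⟪w y, h'⟫ = ⟪w y, hstar⟫ + t := by rw [hinner y, hyy]; ring
    rw [hy']
    linarith
  have := hmin h' hnorm'
  linarith
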